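/- Suppose U is an ultrafilter over κ such that for any family S ⊆ U of cardinality at most λ, there is a set X of cardinality at most μ meeting every member of S. Then for any ordinal α with μ^{|α|} < λ, U is (λ,λ';α)-nonregular for all λ' < λ; and if μ^{|α|} < cf(λ), then U is (λ,λ;α)-nonregular. -/

import Mathlib

universe u

namespace UMeas

variable {A : Type u}

/-- The first `n` values of an infinite sequence, as a list. -/
def seg (s : ℕ → A) (n : ℕ) : List A := List.ofFn (fun i : Fin n => s i)

/-- `T` is a `U`-branching tree: a set of finite sequences closed under initial
segments, containing the empty sequence, whose branching sets are in `U`. -/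
def IsUTree (U : Ultrafilter A) (T : Set (List A)) : Prop :=
  ([] ∈ T) ∧ (∀ σ ∈ T, ∀ τ : List A, τ <+: σ → τ ∈ T) ∧
    ∀ σ ∈ T, {a : A | σ ++ [a] ∈ T} ∈ U

/-- The set of infinite branches through `T`. -/
def branches (T : Set (List A)) : Set (ℕ → A) := {s | ∀ n, seg s n ∈ T}

/-- Concatenation `σ⌢s` of a finite sequence with an infinite sequence. -/
def app (σ : List A) (s : ℕ → A) : ℕ → A :=
  fun n => if h : n < σ.length then σ.get ⟨n, h⟩ else s (n - σ.length)

/-- The section `X↾σ = {s | σ⌢s ∈ X}`. -/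
def sect (X : Set (ℕ → A)) (σ : List A) : Set (ℕ → A) := {s | app σ s ∈ X}

def ULarge (U : Ultrafilter A) (X : Set (ℕ → A)) : Prop :=
  ∃ T, IsUTree U T ∧ branches T ⊆ X

def USmall (U : Ultrafilter A) (X : Set (ℕ → A)) : Prop :=
  ∃ T, IsUTree U T ∧ branches T ∩ X = ∅

def UDetermined (U : Ultrafilter A) (X : Set (ℕ → A)) : Prop :=
  ULarge U X ∨ USmall U X

def UNull (U : Ultrafilter A) (X : Set (ℕ → A)) : Prop :=
  ∀ σ : List A, USmall U (sect X σ)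

def UMeasurable (U : Ultrafilter A) (X : Set (ℕ → A)) : Prop :=
  ∀ σ : List A, UDetermined U (sect X σ)

end UMeas

namespace UMeas

/-- Sequences of ordinal length `β` with values in `A`. -/
def OSeq (A : Type u) (β : Ordinal.{u}) := ∀ γ : Ordinal.{u}, γ < β → A

/-- Restriction `s↾γ` of an ordinal-length sequence. -/
def ores {A : Type u} {β : Ordinal.{u}} (s : OSeq A β) (γ : Ordinal.{u}) (h : γ ≤ β) :
    OSeq A γ := fun δ hδ => s δ (hδ.trans_le h)

/-- Extension `s⌢⟨a⟩` of an ordinal-length sequence by one element. -/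
noncomputable def oext {A : Type u} {β : Ordinal.{u}} (s : OSeq A β) (a : A) : OSeq A (β + 1) :=
  fun δ hδ => if h : δ < β then s δ h else a

/-- A closed `U`-branching tree of height `α`: for each `β`, `mem β` is the set of
sequences of length `β` in the tree (only levels `β < α` are relevant). -/
structure ClosedUBT (A : Type u) (U : Ultrafilter A) (α : Ordinal.{u}) where
  mem : ∀ β : Ordinal.{u}, Set (OSeq A β)
  isTree : ∀ β γ : Ordinal.{u}, β < α → (h : γ ≤ β) → ∀ s ∈ mem β, ores s γ h ∈ mem γ
  succ : ∀ β : Ordinal.{u}, β + 1 < α → ∀ s ∈ mem β, {a : A | oext s a ∈ mem (β + 1)} ∈ U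
  nonsucc : ∀ β : Ordinal.{u}, β < α → (¬ ∃ γ : Ordinal.{u}, β = γ + 1) →
    ∀ s : OSeq A β, s ∈ mem β ↔ ∀ γ : Ordinal.{u}, (h : γ < β) → ores s γ h.le ∈ mem γ

/-- `U` is `(l, m; α)`-regular: there is a family of `l` closed `U`-branching trees of
height `α + 1` such that no subfamily of size `m` has a common maximal element. -/
def LMARegular {A : Type u} (U : Ultrafilter A) (l m : Cardinal.{u}) (α : Ordinal.{u}) : Prop :=
  ∃ T : (Cardinal.ord l).ToType → ClosedUBT A U (α + 1),
    ∀ S : Set (Cardinal.ord l).ToType, Cardinal.mk ↥S = m →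
      ¬ ∃ s : OSeq A α, ∀ β ∈ S, s ∈ (T β).mem α

end UMeas

/-!
Given closed `U`-branching trees `T i` indexed by a set of size `l`, build nodes `sᵢ ∈ T i`
of every length `γ ≤ α` at once by transfinite recursion: at a successor step the sets of
admissible extensions of the current nodes are `l` many members of `U`, so a single set `X_γ`
of size at most `m` meets all of them, and every node is extended by an element of `X_γ`;
limit levels are free because the trees are closed. The maximal nodes `sᵢ` then all lie in
`∏_{γ<α} X_γ`, a set of size at most `m ^ |α|`. When this is smaller than `l` (resp. than
`cf l`), the pigeonhole principle yields `l'` (resp. `l`) trees sharing the same maximal node.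
Finitely many trees always share a maximal node, as their intersection is again a closed
`U`-branching tree.
-/

universe v

open Cardinal Set

theorem WellFoundedLT.exists_recursive_choice {α : Type*} [LT α] [WellFoundedLT α] {B : Sort*}
    (P : ∀ x : α, (∀ y < x, B) → B → Prop) (h : ∀ x prev, ∃ b, P x prev b) :
    ∃ f : α → B, ∀ x, P x (fun y _ => f y) (f x) := by
  choose g hg using h
  refine ⟨WellFoundedLT.fix g, fun x => ?_⟩
  rw [WellFoundedLT.fix_eq]
  exact hg _ _

theorem Cardinal.infinite_pigeonhole_card_of_lt {β α : Type u} (f : β → α) {κ : Cardinal.{u}}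
    (hκ : κ < #β) (hα : #α < #β) (hβ : ℵ₀ ≤ #β) : ∃ a : α, κ ≤ #(f ⁻¹' {a}) := by
  rcases lt_or_ge (max #α κ) ℵ₀ with hfin | hinf
  · obtain ⟨a, ha⟩ := infinite_pigeonhole_card f ℵ₀ hβ le_rfl
      (by rw [isRegular_aleph0.cof_ord]; exact (le_max_left _ _).trans_lt hfin)
    exact ⟨a, ((le_max_right _ _).trans hfin.le).trans ha⟩
  · obtain ⟨a, ha⟩ := infinite_pigeonhole_card f (Order.succ (max #α κ))
      (Order.succ_le_of_lt (max_lt hα hκ)) (hinf.trans (Order.le_succ _))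
      (by rw [(isRegular_succ hinf).cof_ord]; exact Order.lt_succ_of_le (le_max_left _ _))
    exact ⟨a, ((le_max_right _ _).trans (Order.le_succ _)).trans ha⟩

namespace UMeas

variable {A : Type u} {U : Ultrafilter A} {α : Ordinal.{u}} {m : Cardinal.{u}} {I : Type v}

def HasSmallHittingSet (U : Ultrafilter A) (m : Cardinal.{u}) (I : Type v) : Prop :=
  ∀ B : I → Set A, (∀ i, B i ∈ U) → ∃ X : Set A, #X ≤ m ∧ ∀ i, (X ∩ B i).Nonempty

def ofFun (g : Ordinal.{u} → A) (γ : Ordinal.{u}) : OSeq A γ := fun δ _ => g δ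

theorem oext_ofFun (g : Ordinal.{u} → A) (γ : Ordinal.{u}) :
    oext (ofFun g γ) (g γ) = ofFun g (γ + 1) := by
  funext δ hδ
  unfold oext ofFun
  split_ifs with h
  · rfl
  · rw [le_antisymm (Order.lt_add_one_iff.1 hδ) (not_lt.1 h)]

namespace ClosedUBT

def inter (T : I → ClosedUBT A U α) (S : Set I) (hS : S.Finite) : ClosedUBT A U α where
  mem β := {s | ∀ i ∈ S, s ∈ (T i).mem β}
  isTree β γ hβ h s hs i hi := (T i).isTree β γ hβ h s (hs i hi)
  succ β hβ s hs := by
    have heq : {a : A | ∀ i ∈ S, oext s a ∈ (T i).mem (β + 1)}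
        = ⋂ i ∈ S, {a : A | oext s a ∈ (T i).mem (β + 1)} := by
      ext a
      simp only [mem_iInter]
      rfl
    exact heq ▸ (Filter.biInter_mem hS).2 fun i hi => (T i).succ β hβ s (hs i hi)
  nonsucc β hβ hns s :=
    ⟨fun hs γ h i hi => ((T i).nonsucc β hβ hns s).1 (hs i hi) γ h,
     fun h i hi => ((T i).nonsucc β hβ hns s).2 fun γ hγ => h γ hγ i hi⟩

theorem exists_extension (T : I → ClosedUBT A U (α + 1))
    (hmeet : HasSmallHittingSet U m I)
    {γ : Ordinal.{u}} (hγ : γ < α) (t : I → OSeq A γ) (ht : ∀ i, t i ∈ (T i).mem γ) :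
    ∃ a : I → A, #(range a) ≤ m ∧ ∀ i, oext (t i) (a i) ∈ (T i).mem (γ + 1) := by
  have hsucc : γ + 1 < α + 1 := Order.lt_add_one_iff.2 (Order.add_one_le_of_lt hγ)
  obtain ⟨X, hX, hXB⟩ := hmeet (fun i => {a | oext (t i) a ∈ (T i).mem (γ + 1)})
    fun i => (T i).succ γ hsucc (t i) (ht i)
  choose a ha using hXB
  exact ⟨a, (mk_le_mk_of_subset (range_subset_iff.2 fun i => (ha i).1)).trans hX,
    fun i => (ha i).2⟩

theorem ofFun_mem_of_forall_oext_mem (T : I → ClosedUBT A U (α + 1)) (f : Ordinal.{u} → I → A)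
    (hf : ∀ γ < α, (∀ i, ofFun (f · i) γ ∈ (T i).mem γ) →
      ∀ i, oext (ofFun (f · i) γ) (f γ i) ∈ (T i).mem (γ + 1)) :
    ∀ γ ≤ α, ∀ i, ofFun (f · i) γ ∈ (T i).mem γ := by
  intro γ
  induction γ using WellFoundedLT.induction with
  | ind γ IH =>
    intro hγα i
    by_cases hsucc : ∃ δ, γ = δ + 1
    · obtain ⟨δ, rfl⟩ := hsucc
      have hδ : δ < δ + 1 := Order.lt_add_one_iff.2 le_rfl
      rw [← oext_ofFun]
      exact hf δ (hδ.trans_le hγα) (fun j => IH δ hδ (hδ.le.trans hγα) j) i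
    · exact ((T i).nonsucc γ (Order.lt_add_one_iff.2 hγα) hsucc _).2
        fun δ hδ => IH δ hδ (hδ.le.trans hγα) i

end ClosedUBT

theorem exists_code_of_mk_range_le (f : Ordinal.{u} → I → A)
    (hf : ∀ γ < α, #(range (f γ)) ≤ m) :
    ∃ W : Type u, #W ≤ m ^ α.card ∧
      ∃ (code : I → W) (g : W → OSeq A α), ∀ i, g (code i) = ofFun (f · i) α := by
  let q : α.ToType → Iio α := Ordinal.ToType.mk.symm
  refine ⟨∀ x : α.ToType, range (f (q x)), ?_, fun i x => ⟨f (q x) i, mem_range_self i⟩,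
    fun c δ hδ => (c (Ordinal.ToType.mk ⟨δ, hδ⟩)).1, fun i => ?_⟩
  · calc #(∀ x : α.ToType, range (f (q x)))
        = prod fun x => #(range (f (q x))) := mk_pi _
      _ ≤ prod fun _ : α.ToType => m := prod_le_prod _ _ fun x => hf _ (q x).2
      _ = m ^ α.card := by rw [prod_const', mk_toType]
  · funext δ hδ
    simp only [q, OrderIso.symm_apply_apply]
    rfl

theorem exists_code_of_small_meets (T : I → ClosedUBT A U (α + 1))
    (hmeet : HasSmallHittingSet U m I) :
    ∃ W : Type u, #W ≤ m ^ α.card ∧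
      ∃ (code : I → W) (g : W → OSeq A α), ∀ i, g (code i) ∈ (T i).mem α := by
  have : Nonempty A := (U.nonempty_of_mem Filter.univ_mem).to_subtype.map Subtype.val
  obtain ⟨f, hf⟩ := WellFoundedLT.exists_recursive_choice (α := Ordinal.{u}) (B := I → A)
    (fun γ prev a => γ < α → (∀ i, (fun δ h => prev δ h i) ∈ (T i).mem γ) →
      #(range a) ≤ m ∧ ∀ i, oext (fun δ h => prev δ h i) (a i) ∈ (T i).mem (γ + 1))
    fun γ prev => by
      by_cases h : γ < α ∧ ∀ i, (fun δ h => prev δ h i) ∈ (T i).mem γ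
      · obtain ⟨a, ha⟩ := ClosedUBT.exists_extension T hmeet h.1 _ h.2
        exact ⟨a, fun _ _ => ha⟩
      · exact ⟨fun _ => Classical.arbitrary A, fun h1 h2 => absurd ⟨h1, h2⟩ h⟩
  have hmem := ClosedUBT.ofFun_mem_of_forall_oext_mem T f fun γ hγ ht => (hf γ hγ ht).2
  obtain ⟨W, hW, code, g, hg⟩ :=
    exists_code_of_mk_range_le f fun γ hγ => (hf γ hγ (hmem γ hγ.le)).1
  exact ⟨W, hW, code, g, fun i => hg i ▸ hmem α le_rfl i⟩

theorem ClosedUBT.exists_mem_top (T : ClosedUBT A U (α + 1)) : ∃ s : OSeq A α, s ∈ T.mem α := by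
  obtain ⟨_, _, code, g, hg⟩ := exists_code_of_small_meets (m := 1) (fun _ : PUnit.{u + 1} => T)
    fun B hB => by
      obtain ⟨a, ha⟩ := U.nonempty_of_mem (hB PUnit.unit)
      exact ⟨{a}, (mk_singleton a).le, fun _ => ⟨a, rfl, ha⟩⟩
  exact ⟨_, hg PUnit.unit⟩

theorem not_lmaRegular_of_lt_aleph0 {l l' : Cardinal.{u}} (hl' : l' ≤ l) (hfin : l' < ℵ₀) :
    ¬ LMARegular U l l' α := by
  rintro ⟨T, hT⟩
  obtain ⟨S, hS⟩ := le_mk_iff_exists_set.1 (hl'.trans (mk_ord_toType l).ge)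
  obtain ⟨s, hs⟩ := (ClosedUBT.inter T S (lt_aleph0_iff_set_finite.1 (hS ▸ hfin))).exists_mem_top
  exact hT S hS ⟨s, hs⟩

theorem not_lmaRegular_of_pigeonhole {l l' : Cardinal.{u}}
    (hmeet : HasSmallHittingSet U m l.ord.ToType)
    (hfiber : ∀ (W : Type u) (code : l.ord.ToType → W), #W ≤ m ^ α.card →
      ∃ w, l' ≤ #(code ⁻¹' {w})) :
    ¬ LMARegular U l l' α := by
  rintro ⟨T, hT⟩
  obtain ⟨W, hW, code, g, hg⟩ := exists_code_of_small_meets T hmeet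
  obtain ⟨w, hw⟩ := hfiber W code hW
  obtain ⟨S, hSw, hS⟩ := le_mk_iff_exists_subset.1 hw
  exact hT S hS ⟨g w, fun i hi => hSw hi ▸ hg i⟩

end UMeas

theorem stmt17 {A : Type u} (U : Ultrafilter A) (l m : Cardinal.{u})
    (hU : ∀ S : Set (Set A), (∀ s ∈ S, s ∈ U) → Cardinal.mk ↥S ≤ l →
      ∃ X : Set A, Cardinal.mk ↥X ≤ m ∧ ∀ s ∈ S, (X ∩ s).Nonempty)
    (α : Ordinal.{u}) :
    ((m ^ α.card < l) → ∀ l' : Cardinal.{u}, l' < l → ¬ UMeas.LMARegular U l l' α) ∧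
    ((m ^ α.card < (Cardinal.ord l).cof) → ¬ UMeas.LMARegular U l l α) := by
  rcases lt_or_ge l ℵ₀ with hfin | hinf
  · exact ⟨fun _ l' hl' => UMeas.not_lmaRegular_of_lt_aleph0 hl'.le (hl'.trans hfin),
      fun _ => UMeas.not_lmaRegular_of_lt_aleph0 le_rfl hfin⟩
  have hI : #l.ord.ToType = l := mk_ord_toType l
  have hmeet : UMeas.HasSmallHittingSet U m l.ord.ToType := fun B hB => by
    obtain ⟨X, hX, hXB⟩ := hU (range B) (forall_mem_range.2 hB) (mk_range_le.trans hI.le)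
    exact ⟨X, hX, fun i => hXB _ (mem_range_self i)⟩
  refine ⟨fun hpow l' hl' => UMeas.not_lmaRegular_of_pigeonhole hmeet fun W code hW => ?_,
    fun hpow => UMeas.not_lmaRegular_of_pigeonhole hmeet fun W code hW => ?_⟩
  · rw [← hI] at hl' hpow hinf
    exact infinite_pigeonhole_card_of_lt code hl' (hW.trans_lt hpow) hinf
  · exact infinite_pigeonhole_card code l hI.ge hinf (hW.trans_lt hpow)
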